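/- arXiv:2206.06329 — 7 statements merged into one kernel-verified Lean document; each statement's English description precedes it below -/
import Mathlib

section
/- Let Z be a topological space, let A ⊆ Z be a nonempty path-connected subset, and suppose B := Z \ A is nonempty. Assume A admits a nearly strict deformation retraction R : Z × [0,1] → Z, and assume the evaluation map p : Holink(Z, A) → A, p(γ) = γ(0), is a Hurewicz fibration. Then A is contained in the closure of B. -/
open Set unitInterval Topology

/- The deformation retraction run backwards from a point `b ∉ A`, `t ↦ R (b, 1 - t)`, is a path in
the homotopy link ending at `b`. Sliding its starting point `R (b, 1)` along a path in `A` to any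
given `a ∈ A`, the homotopy lifting property yields a path in the homotopy link starting at `a`;
such a path leaves `A` immediately, so `a` is a limit of points of `Z \ A`. -/

/-- The homotopy link of a subset `A` of a topological space `Z`: the set of continuous
paths `γ : [0,1] → Z` with `γ 0 ∈ A` and `γ t ∉ A` for all `t ≠ 0`. -/
def Holink {Z : Type*} [TopologicalSpace Z] (A : Set Z) : Set C(unitInterval, Z) :=
  {γ | γ 0 ∈ A ∧ ∀ t : unitInterval, t ≠ 0 → γ t ∉ A}

/-- A map `p : E → B` is a Hurewicz fibration: it has the homotopy lifting property
with respect to every topological space. -/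
def IsHurewiczFibration {E B : Type*} [TopologicalSpace E] [TopologicalSpace B]
    (p : E → B) : Prop :=
  ∀ (W : Type) (_ : TopologicalSpace W) (H : C(W × unitInterval, B)) (G₀ : C(W, E)),
    (∀ w, p (G₀ w) = H (w, 0)) →
    ∃ G : C(W × unitInterval, E), (∀ wt, p (G wt) = H wt) ∧ ∀ w, G (w, 0) = G₀ w

theorem IsHurewiczFibration.mem_range_of_joined {E B : Type*} [TopologicalSpace E]
    [TopologicalSpace B] {p : E → B} (hp : IsHurewiczFibration p) {b b' : B}
    (hb : b ∈ range p) (hbb' : Joined b b') : b' ∈ range p := by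
  obtain ⟨e, rfl⟩ := hb
  let γ := hbb'.somePath
  let H : C(Unit × I, B) := (γ : C(I, B)).comp ContinuousMap.snd
  obtain ⟨G, hG, -⟩ := hp Unit inferInstance H (ContinuousMap.const Unit e) fun _ => γ.source.symm
  exact ⟨G ((), 1), (hG ((), 1)).trans γ.target⟩

theorem mem_closure_compl_of_mem_holink {Z : Type*} [TopologicalSpace Z] {A : Set Z}
    {γ : C(I, Z)} (hγ : γ ∈ Holink A) : γ 0 ∈ closure Aᶜ := by
  have : (𝓝[>] (0 : I)).NeBot := nhdsGT_neBot_of_exists_gt ⟨1, zero_lt_one⟩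
  refine mem_closure_of_tendsto (b := 𝓝[>] 0)
    ((γ.continuous.tendsto 0).mono_left nhdsWithin_le_nhds) ?_
  filter_upwards [self_mem_nhdsWithin] with t ht
  exact hγ.2 t ht.ne'

theorem curry_comp_symm_mem_holink {Z : Type*} [TopologicalSpace Z] {A : Set Z}
    {R : C(Z × I, Z)} {b : Z} (hR1 : R (b, 1) ∈ A) (hRc : ∀ t : I, t ≠ 1 → R (b, t) ∉ A) :
    (R.curry b).comp (symmHomeomorph : C(I, I)) ∈ Holink A := by
  refine ⟨by simpa using hR1, fun t ht => hRc (σ t) ?_⟩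
  rwa [Ne, symm_eq_one]

theorem frontier_condition_of_tame_and_holink_fibration_general
    {Z : Type} [TopologicalSpace Z] (A : Set Z)
    (hpc : IsPathConnected A)
    (hB : (univ \ A : Set Z).Nonempty)
    (R : C(Z × unitInterval, Z))
    (hRc : ∀ z : Z, z ∈ univ \ A → ∀ t : unitInterval, t ≠ 1 → R (z, t) ∈ univ \ A)
    (hR1 : ∀ z : Z, R (z, 1) ∈ A)
    (hfib : IsHurewiczFibration
      (fun γ : Holink A => (⟨γ.1 0, γ.2.1⟩ : A))) :
    A ⊆ closure (univ \ A) := by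
  intro a ha
  obtain ⟨b, hb⟩ := hB
  have hδ := curry_comp_symm_mem_holink (hR1 b) fun t ht => (hRc b hb t ht).2
  have hjoined : Joined (⟨_, hδ.1⟩ : A) ⟨a, ha⟩ :=
    (isPathConnected_iff_pathConnectedSpace.mp hpc).joined _ _
  obtain ⟨⟨η, hη⟩, hη0⟩ := hfib.mem_range_of_joined ⟨⟨_, hδ⟩, rfl⟩ hjoined
  have hηa : η 0 = a := congrArg Subtype.val hη0
  rw [← compl_eq_univ_sdiff, ← hηa]
  exact mem_closure_compl_of_mem_holink hη

/-- Frontier condition for a tame pair with fibered homotopy link: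
if `A` is nonempty, path-connected, its complement `B = Z \ A` is nonempty,
`A` admits a nearly strict deformation retraction, and evaluation at `0` of the
homotopy link is a Hurewicz fibration, then `A ⊆ closure B`. -/
theorem frontier_condition_of_tame_and_holink_fibration
    {Z : Type} [TopologicalSpace Z] (A : Set Z)
    (hA : A.Nonempty) (hpc : IsPathConnected A)
    (hB : (univ \ A : Set Z).Nonempty)
    (R : C(Z × unitInterval, Z))
    (hR0 : ∀ z : Z, R (z, 0) = z)
    (hRA : ∀ a ∈ A, ∀ t : unitInterval, R (a, t) = a)
    (hRc : ∀ z : Z, z ∈ univ \ A → ∀ t : unitInterval, t ≠ 1 → R (z, t) ∈ univ \ A)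
    (hR1 : ∀ z : Z, R (z, 1) ∈ A)
    (hfib : IsHurewiczFibration
      (fun γ : Holink A => (⟨γ.1 0, γ.2.1⟩ : A))) :
    A ⊆ closure (univ \ A) :=
  frontier_condition_of_tame_and_holink_fibration_general A hpc hB R hRc hR1 hfib
end

section
/- Let Z and M be topological spaces and A ⊆ Z a subset. Then the homotopy link Holink(Z × M, A ×ˢ univ) of the product pair is homotopy equivalent to the product space Holink(Z, A) × M. -/
/-!
A path in `Z × M` is a pair of paths, and the homotopy link condition for `A × M` only
constrains its `Z`-component, so `Holink(Z × M, A × M) ≃ₜ Holink(Z, A) × C(I, M)`. Since `I`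
is contractible and locally compact, precomposing with a contraction of `I` deformation
retracts the path space `C(I, M)` onto `M`.
-/

open Set unitInterval

namespace ContinuousMap

variable {X Y Z M : Type*} [TopologicalSpace X] [TopologicalSpace Y] [TopologicalSpace Z]
  [TopologicalSpace M]

theorem continuous_prodMk' [LocallyCompactSpace X] :
    Continuous fun p : C(X, Y) × C(X, Z) => p.1.prodMk p.2 :=
  continuous_of_continuous_uncurry _ <|
    show Continuous fun q : (C(X, Y) × C(X, Z)) × X => (q.1.1 q.2, q.1.2 q.2) by fun_prop

def Homotopy.compRightContinuousMap [LocallyCompactSpace Y] {f₀ f₁ : C(X, Y)}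
    (F : Homotopy f₀ f₁) :
    Homotopy (compRightContinuousMap M f₀) (compRightContinuousMap M f₁) where
  toFun p := p.2.comp (F.curry p.1)
  continuous_toFun := continuous_snd.compCM (F.curry.continuous.comp continuous_fst)
  map_zero_left g := by ext; simp
  map_one_left g := by ext; simp

theorem Homotopic.compRightContinuousMap [LocallyCompactSpace Y] {f₀ f₁ : C(X, Y)}
    (h : Homotopic f₀ f₁) :
    Homotopic (compRightContinuousMap M f₀) (compRightContinuousMap M f₁) :=
  h.map Homotopy.compRightContinuousMap

def HomotopyEquiv.arrowCongrLeft [LocallyCompactSpace X] [LocallyCompactSpace Y]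
    (e : X ≃ₕ Y) : C(X, M) ≃ₕ C(Y, M) where
  toFun := compRightContinuousMap M e.invFun
  invFun := compRightContinuousMap M e.toFun
  left_inv := e.left_inv.compRightContinuousMap
  right_inv := e.right_inv.compRightContinuousMap

theorem nonempty_homotopyEquiv_of_contractibleSpace [LocallyCompactSpace X]
    [ContractibleSpace X] : Nonempty (C(X, M) ≃ₕ M) :=
  (ContractibleSpace.hequiv_unit X).map fun e =>
    e.arrowCongrLeft.trans Homeomorph.continuousMapOfUnique.symm.toHomotopyEquiv

end ContinuousMap

instance unitInterval.contractibleSpace : ContractibleSpace I :=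
  (convex_Icc (0 : ℝ) 1).contractibleSpace ⟨0, left_mem_Icc.2 zero_le_one⟩

section Holink

variable {Z M : Type*} [TopologicalSpace Z] [TopologicalSpace M]

theorem mem_holink_prod_univ_iff {A : Set Z} {γ : C(I, Z × M)} :
    γ ∈ Holink (A ×ˢ (univ : Set M)) ↔ ContinuousMap.fst.comp γ ∈ Holink A := by
  simp [Holink]

def holinkProdUnivHomeomorph (A : Set Z) :
    Holink (A ×ˢ (univ : Set M)) ≃ₜ Holink A × C(I, M) where
  toFun γ := (⟨ContinuousMap.fst.comp γ.1, mem_holink_prod_univ_iff.1 γ.2⟩,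
    ContinuousMap.snd.comp γ.1)
  invFun p := ⟨p.1.1.prodMk p.2, mem_holink_prod_univ_iff.2 p.1.2⟩
  left_inv _ := rfl
  right_inv _ := rfl
  continuous_toFun :=
    (((ContinuousMap.continuous_postcomp _).comp continuous_subtype_val).subtype_mk _).prodMk
      ((ContinuousMap.continuous_postcomp _).comp continuous_subtype_val)
  continuous_invFun := (ContinuousMap.continuous_prodMk'.comp
    (continuous_subtype_val.prodMap continuous_id)).subtype_mk _

end Holink

/-- The homotopy link of the product pair `(Z × M, A × M)` is homotopy equivalent to
`Holink(Z, A) × M`. -/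
theorem holink_prod_homotopyEquiv
    {Z M : Type} [TopologicalSpace Z] [TopologicalSpace M] (A : Set Z) :
    Nonempty
      (ContinuousMap.HomotopyEquiv
        (Holink (A ×ˢ (univ : Set M)))
        (↥(Holink A) × M)) :=
  ContinuousMap.nonempty_homotopyEquiv_of_contractibleSpace.map fun e =>
    (holinkProdUnivHomeomorph A).toHomotopyEquiv.trans
      ((ContinuousMap.HomotopyEquiv.refl _).prodCongr e)
end

section
/- Let Z and M be topological spaces and A ⊆ Z a subset. The map sending γ ∈ Holink(Z × M, A ×ˢ univ) to the pair (Prod.fst ∘ γ, Prod.snd ∘ γ) is a homeomorphism from Holink(Z × M, A ×ˢ univ) onto the product space Holink(Z, A) × C([0,1], M). -/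
open Set unitInterval

lemma mem_holink_prod {Z M : Type} [TopologicalSpace Z] [TopologicalSpace M] (A : Set Z)
    (γ : C(unitInterval, Z × M)) :
    γ ∈ Holink (A ×ˢ (univ : Set M)) ↔ ContinuousMap.fst.comp γ ∈ Holink A := by
  simp [Holink, Set.mem_prod]

/-- The map `γ ↦ (fst ∘ γ, snd ∘ γ)` is a homeomorphism from the homotopy link of
the product pair `(Z × M, A × M)` onto `Holink(Z, A) × C([0,1], M)`. -/
theorem holink_prod_homeomorph
    {Z M : Type} [TopologicalSpace Z] [TopologicalSpace M] (A : Set Z) :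
    ∃ e : ↥(Holink (A ×ˢ (univ : Set M))) ≃ₜ (↥(Holink A) × C(unitInterval, M)),
      ∀ γ : ↥(Holink (A ×ˢ (univ : Set M))),
        ((e γ).1 : C(unitInterval, Z)) = ContinuousMap.fst.comp γ.1 ∧
        (e γ).2 = ContinuousMap.snd.comp γ.1 := by
  refine ⟨{
    toFun := fun γ => (⟨ContinuousMap.fst.comp γ.1, (mem_holink_prod A γ.1).1 γ.2⟩,
      ContinuousMap.snd.comp γ.1)
    invFun := fun p => ⟨(p.1.1 : C(unitInterval, Z)).prodMk p.2,
      (mem_holink_prod A _).2 p.1.2⟩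
    left_inv := fun γ => by
      ext t <;> rfl
    right_inv := fun p => by
      refine Prod.ext (Subtype.ext ?_) ?_ <;> ext t <;> rfl
    continuous_toFun := by
      refine Continuous.prodMk (Continuous.subtype_mk ?_ _) ?_ <;>
        exact (ContinuousMap.continuous_postcomp _).comp continuous_subtype_val
    continuous_invFun := by
      refine Continuous.subtype_mk ?_ _
      refine ContinuousMap.continuous_of_continuous_uncurry _ ?_
      apply Continuous.prodMk
      · exact ContinuousEval.continuous_eval.comp
          ((continuous_subtype_val.comp (continuous_fst.comp continuous_fst)).prodMk
            continuous_snd)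
      · exact ContinuousEval.continuous_eval.comp
          ((continuous_snd.comp continuous_fst).prodMk continuous_snd) },
    fun γ => ⟨rfl, rfl⟩⟩
end

section
/- Let Y be a topological space and consider Z = Y × [0,1] with the subset A = univ ×ˢ {0} (that is, A = Y × {0}). Then the evaluation map Holink(Z, A) → Y sending γ to the first coordinate of γ(0) is a Hurewicz fibration. -/
open Set unitInterval

/-- Clamp a real number into `[0,1]`. -/
noncomputable def eI : ℝ → unitInterval := fun r => Set.projIcc 0 1 zero_le_one r

lemma eI_coe (t : unitInterval) : eI (t : ℝ) = t := Set.projIcc_val zero_le_one t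

lemma eI_nonpos {r : ℝ} (h : r ≤ 0) : eI r = 0 := by
  apply Subtype.ext
  simp [eI, Set.coe_projIcc, min_eq_right (h.trans zero_le_one), max_eq_left h]

lemma eI_zero : eI 0 = 0 := eI_nonpos le_rfl

lemma eI_continuous : Continuous eI := continuous_projIcc (h := zero_le_one)

/-- For the collared pair `(Y × [0,1], Y × {0})`, the evaluation map
`Holink → Y`, `γ ↦ (γ 0).1`, is a Hurewicz fibration. -/
theorem holink_collar_eval_isHurewiczFibration
    {Y : Type} [TopologicalSpace Y] :
    IsHurewiczFibration
      (fun γ : Holink ((univ : Set Y) ×ˢ ({0} : Set unitInterval)) =>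
        (γ.1 0).1) := by
  intro W _ H G₀ hG₀
  let A : Set (Y × unitInterval) := (univ : Set Y) ×ˢ ({0} : Set unitInterval)
  -- basic facts about the initial lift
  have hA0 : ∀ w, ((G₀ w).1 0).2 = 0 := fun w => ((G₀ w).2.1).2
  have hAne : ∀ w (t : unitInterval), t ≠ 0 → ((G₀ w).1 t).2 ≠ 0 := by
    intro w t ht h2
    exact (G₀ w).2.2 t ht ⟨trivial, h2⟩
  -- the underlying continuous evaluation of `G₀`
  let K : C(W, C(unitInterval, Y × unitInterval)) :=
    ⟨fun w => (G₀ w : C(unitInterval, Y × unitInterval)),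
      continuous_subtype_val.comp G₀.continuous⟩
  let KU : C(W × unitInterval, Y × unitInterval) := K.uncurry
  have hKU : ∀ w t, KU (w, t) = (G₀ w).1 t := fun _ _ => rfl
  -- the total lift as a bare function on ((W × I) × I)
  let fst' : (W × unitInterval) × unitInterval → Y := fun x =>
    if (x.2 : ℝ) ≤ (x.1.2 : ℝ) then H (x.1.1, eI ((x.1.2 : ℝ) - (x.2 : ℝ)))
    else (KU (x.1.1, eI ((x.2 : ℝ) - (x.1.2 : ℝ)))).1
  let snd' : (W × unitInterval) × unitInterval → unitInterval := fun x =>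
    ⟨max ((KU (x.1.1, eI ((x.2 : ℝ) - (x.1.2 : ℝ)))).2 : ℝ) ((x.1.2 : ℝ) * (x.2 : ℝ)),
      ⟨le_max_of_le_left (KU (x.1.1, eI ((x.2 : ℝ) - (x.1.2 : ℝ)))).2.2.1,
        max_le (KU (x.1.1, eI ((x.2 : ℝ) - (x.1.2 : ℝ)))).2.2.2
          (unitInterval.mul_mem x.1.2.2 x.2.2).2⟩⟩
  have hcont_snd''' : Continuous fun x : (W × unitInterval) × unitInterval =>
      KU (x.1.1, eI ((x.2 : ℝ) - (x.1.2 : ℝ))) :=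
    KU.continuous.comp ((continuous_fst.comp continuous_fst).prodMk
      (eI_continuous.comp ((continuous_subtype_val.comp continuous_snd).sub
        (continuous_subtype_val.comp (continuous_snd.comp continuous_fst)))))
  have hcont_fst : Continuous fst' := by
    apply Continuous.if_le
    · exact H.continuous.comp ((continuous_fst.comp continuous_fst).prodMk
        (eI_continuous.comp ((continuous_subtype_val.comp (continuous_snd.comp continuous_fst)).sub
          (continuous_subtype_val.comp continuous_snd))))
    · exact continuous_fst.comp hcont_snd'''
    · exact continuous_subtype_val.comp continuous_snd
    · exact continuous_subtype_val.comp (continuous_snd.comp continuous_fst)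
    · rintro ⟨⟨w, s⟩, t⟩ h
      simp only at h ⊢
      rw [h, sub_self, eI_zero, hKU]
      exact (hG₀ w).symm
  have hcont_snd : Continuous snd' :=
    Continuous.subtype_mk (((continuous_subtype_val.comp
      (continuous_snd.comp hcont_snd''')).max
      ((continuous_subtype_val.comp (continuous_snd.comp continuous_fst)).mul
        (continuous_subtype_val.comp continuous_snd)))) _
  let Φ : C((W × unitInterval) × unitInterval, Y × unitInterval) :=
    ⟨fun x => (fst' x, snd' x), hcont_fst.prodMk hcont_snd⟩
  -- membership of each slice in the holink
  have hmem : ∀ ws : W × unitInterval, Φ.curry ws ∈ Holink A := by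
    rintro ⟨w, s⟩
    constructor
    · -- value at 0 lies in A
      refine ⟨trivial, ?_⟩
      show snd' ((w, s), 0) = 0
      apply Subtype.ext
      have h1 : eI ((0 : unitInterval) - (s : ℝ)) = 0 := by
        apply eI_nonpos; simp [s.2.1]
      show max _ _ = (0 : ℝ)
      rw [h1, hKU]
      simp [hA0 w, ← Subtype.coe_inj.2 (hA0 w)]
    · -- away from 0 it avoids A
      rintro t ht ⟨-, h2⟩
      have h2' : snd' ((w, s), t) = 0 := h2
      have htpos : (0 : ℝ) < (t : ℝ) :=
        lt_of_le_of_ne t.2.1 (fun h => ht (Subtype.ext h.symm))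
      have h2'' : max ((KU (w, eI ((t : ℝ) - (s : ℝ)))).2 : ℝ) ((s : ℝ) * (t : ℝ)) = 0 :=
        congrArg Subtype.val h2'
      rcases eq_or_ne s 0 with hs | hs
      · -- s = 0 : the slice is G₀ w itself up to the max with 0
        have : eI ((t : ℝ) - (s : ℝ)) = t := by
          rw [hs]; simpa using eI_coe t
        rw [this, hKU] at h2''
        have := hAne w t ht
        apply this
        apply Subtype.ext
        have hnn : (0 : ℝ) ≤ (((G₀ w).1 t).2 : ℝ) := ((G₀ w).1 t).2.2.1
        have hle : (((G₀ w).1 t).2 : ℝ) ≤ 0 := h2'' ▸ le_max_left _ _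
        exact le_antisymm hle hnn
      · -- s ≠ 0 : the collar coordinate s * t is positive
        have hspos : (0 : ℝ) < (s : ℝ) :=
          lt_of_le_of_ne s.2.1 (fun h => hs (Subtype.ext h.symm))
        have : (0 : ℝ) < (s : ℝ) * (t : ℝ) := mul_pos hspos htpos
        have hle := le_max_right ((KU (w, eI ((t : ℝ) - (s : ℝ)))).2 : ℝ) ((s : ℝ) * (t : ℝ))
        rw [h2''] at hle
        exact absurd hle (not_le.mpr this)
  refine ⟨⟨fun ws => ⟨Φ.curry ws, hmem ws⟩,
    Continuous.subtype_mk Φ.curry.continuous _⟩, ?_, ?_⟩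
  · rintro ⟨w, s⟩
    show (Φ ((w, s), 0)).1 = H (w, s)
    show fst' ((w, s), 0) = H (w, s)
    have h0 : ((0 : unitInterval) : ℝ) ≤ (s : ℝ) := s.2.1
    simp only [fst', if_pos h0]
    norm_num [eI_coe s]
  · intro w
    apply Subtype.ext
    apply ContinuousMap.ext
    intro t
    show Φ ((w, 0), t) = (G₀ w).1 t
    have hsndeq : snd' ((w, 0), t) = ((G₀ w).1 t).2 := by
      apply Subtype.ext
      show max _ _ = _
      have : eI ((t : ℝ) - ((0 : unitInterval) : ℝ)) = t := by simpa using eI_coe t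
      rw [this, hKU]
      simp [((G₀ w).1 t).2.2.1]
    rcases eq_or_ne t 0 with ht | ht
    · subst ht
      apply Prod.ext
      · show fst' ((w, 0), 0) = _
        simp only [fst', if_pos le_rfl]
        rw [sub_self, eI_zero]
        exact (hG₀ w).symm
      · rw [show (Φ ((w, 0), 0)).2 = snd' ((w, 0), 0) from rfl, hsndeq]
    · have htpos : ((0 : unitInterval) : ℝ) < (t : ℝ) :=
        lt_of_le_of_ne t.2.1 (fun h => ht (Subtype.ext h.symm))
      apply Prod.ext
      · show fst' ((w, 0), t) = _
        simp only [fst', if_neg (not_le.mpr htpos)]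
        have het : eI ((t : ℝ) - ((0 : unitInterval) : ℝ)) = t := by simpa using eI_coe t
        rw [het, hKU]
      · rw [show (Φ ((w, 0), t)).2 = snd' ((w, 0), t) from rfl, hsndeq]
end

section
/- Let Y be a topological space and A ⊆ Y a subset. The map Holink(Y, A) → Holink(Y × [0,1], A ×ˢ univ) sending a path γ to the path t ↦ (γ(t), 0) is well defined, continuous, and a homotopy equivalence. -/
open Set unitInterval

instance : ContinuousMul unitInterval :=
  ⟨((continuous_subtype_val.fst').mul (continuous_subtype_val.snd')).subtype_mk _⟩

/-- Forward map `Holink(Y, A) → Holink(Y × I, A × I)`. -/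
def holinkFwd {Y : Type} [TopologicalSpace Y] (A : Set Y) :
    C(Holink A, Holink (A ×ˢ (univ : Set unitInterval))) where
  toFun γ := ⟨((ContinuousMap.id Y).prodMk (ContinuousMap.const Y 0)).comp γ.1,
    ⟨⟨γ.2.1, mem_univ _⟩, fun t ht h => γ.2.2 t ht h.1⟩⟩
  continuous_toFun := by
    apply Continuous.subtype_mk
    exact (ContinuousMap.continuous_postcomp _).comp continuous_subtype_val

/-- Backward map `Holink(Y × I, A × I) → Holink(Y, A)`. -/
def holinkBwd {Y : Type} [TopologicalSpace Y] (A : Set Y) :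
    C(Holink (A ×ˢ (univ : Set unitInterval)), Holink A) where
  toFun γ := ⟨(ContinuousMap.fst).comp γ.1,
    ⟨γ.2.1.1, fun t ht h => γ.2.2 t ht ⟨h, mem_univ _⟩⟩⟩
  continuous_toFun := by
    apply Continuous.subtype_mk
    exact (ContinuousMap.continuous_postcomp _).comp continuous_subtype_val

/-- Homotopy from `holinkFwd ∘ holinkBwd` to the identity. -/
def holinkHomotopy {Y : Type} [TopologicalSpace Y] (A : Set Y) :
    ContinuousMap.Homotopy ((holinkFwd A).comp (holinkBwd A))
      (ContinuousMap.id (Holink (A ×ˢ (univ : Set unitInterval)))) where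
  toFun p := ⟨⟨fun t => ((p.2.1 t).1, p.1 * (p.2.1 t).2),
      ((map_continuous p.2.1).fst).prodMk
        (continuous_const.mul ((map_continuous p.2.1).snd))⟩,
    ⟨⟨p.2.2.1.1, mem_univ _⟩, fun t ht h => p.2.2.2 t ht ⟨h.1, mem_univ _⟩⟩⟩
  continuous_toFun := by
    apply Continuous.subtype_mk
    apply ContinuousMap.continuous_of_continuous_uncurry
    have heval : Continuous fun q :
        ((unitInterval × Holink (A ×ˢ (univ : Set unitInterval))) × unitInterval) =>
        (q.1.2.1 : C(unitInterval, Y × unitInterval)) q.2 :=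
      ContinuousEval.continuous_eval.comp
        ((continuous_subtype_val.comp (continuous_snd.comp continuous_fst)).prodMk
          continuous_snd)
    exact (heval.fst).prodMk (((continuous_fst.comp continuous_fst).mul heval.snd))
  map_zero_left γ := Subtype.ext (ContinuousMap.ext fun t => Prod.ext rfl (zero_mul _))
  map_one_left γ := Subtype.ext (ContinuousMap.ext fun t => Prod.ext rfl (one_mul _))

/-- The map `Holink(Y, A) → Holink(Y × [0,1], A × [0,1])`, `γ ↦ (t ↦ (γ t, 0))`,
is well defined, continuous, and a homotopy equivalence. -/
theorem holink_collar_inclusion_homotopyEquiv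
    {Y : Type} [TopologicalSpace Y] (A : Set Y) :
    ∃ h : ContinuousMap.HomotopyEquiv
        (Holink A)
        (Holink (A ×ˢ (univ : Set unitInterval))),
      ∀ (γ : Holink A) (t : unitInterval),
        (h.toFun γ).1 t = (γ.1 t, (0 : unitInterval)) := by
  refine ⟨⟨holinkFwd A, holinkBwd A, ?_, ⟨holinkHomotopy A⟩⟩, fun γ t => rfl⟩
  have : (holinkBwd A).comp (holinkFwd A) = ContinuousMap.id _ := by
    ext γ t
    rfl
  rw [this]
end

section
/- Let X and Y be topological spaces and h : X ≃ₜ Y a homeomorphism. Let Cyl(h) denote the mapping cylinder of h, i.e., the quotient of the disjoint union (X × [0,1]) ⊕ Y (with the quotient topology) by the relation identifying (x,1) with h(x) for every x ∈ X. Then there is a homeomorphism Φ : X × [0,1] ≃ₜ Cyl(h) such that Φ(x,0) is the class of (x,0) in the X × [0,1] summand and Φ(x,1) is the class of h(x) in the Y summand, for every x ∈ X. -/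
open Set unitInterval

/-- The generating relation for the mapping cylinder of `h : X → Y`: identify the
point `(x, 1)` of `X × [0,1]` with the point `h x` of `Y`. -/
def MappingCylinderRel {X Y : Type*} (h : X → Y) :
    (X × unitInterval) ⊕ Y → (X × unitInterval) ⊕ Y → Prop :=
  fun a b => ∃ x : X, a = Sum.inl (x, 1) ∧ b = Sum.inr (h x)

/-- The mapping cylinder of `h : X → Y`: the quotient of `(X × [0,1]) ⊕ Y` by the
smallest equivalence relation identifying `(x, 1)` with `h x`, endowed with the
quotient topology. -/
def MappingCylinder {X Y : Type*} (h : X → Y) : Type _ :=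
  Quot (MappingCylinderRel h)

instance {X Y : Type*} [TopologicalSpace X] [TopologicalSpace Y] (h : X → Y) :
    TopologicalSpace (MappingCylinder h) :=
  instTopologicalSpaceQuot

/-!
The cylinder end `X × {1}` is glued to `Y` along the bijection `h`, so no two points of
`X × [0,1]` are identified and every point of `Y` is already the image of a point of the end.
Hence `(x, t) ↦ [(x, t)]` is a continuous bijection onto the mapping cylinder, whose inverse
is induced by the continuous map `Sum.elim id (fun y ↦ (h⁻¹ y, 1))` on the disjoint union.
-/

namespace MappingCylinder

theorem mk_inl_one_eq_mk_inr {X Y : Type*} (h : X → Y) (x : X) :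
    Quot.mk (MappingCylinderRel h) (Sum.inl (x, 1)) =
      Quot.mk (MappingCylinderRel h) (Sum.inr (h x)) :=
  Quot.sound ⟨x, rfl, rfl⟩

variable {X Y : Type*} [TopologicalSpace X] [TopologicalSpace Y]

theorem continuous_mk_inl (h : X → Y) :
    Continuous fun p : X × I => Quot.mk (MappingCylinderRel h) (Sum.inl p) :=
  continuous_quot_mk.comp continuous_inl

def toProd (h : X ≃ₜ Y) : MappingCylinder (h : X → Y) → X × I :=
  Quot.lift (Sum.elim id fun y => (h.symm y, 1)) <| by
    rintro _ _ ⟨x, rfl, rfl⟩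
    simp

theorem continuous_toProd (h : X ≃ₜ Y) : Continuous (toProd h) :=
  continuous_quot_lift _ <|
    continuous_id.sumElim (h.symm.continuous.prodMk continuous_const)

def homeomorphProd (h : X ≃ₜ Y) : (X × I) ≃ₜ MappingCylinder (h : X → Y) where
  toFun p := Quot.mk _ (Sum.inl p)
  invFun := toProd h
  left_inv _ := rfl
  right_inv := by
    rintro ⟨p | y⟩
    · rfl
    · change Quot.mk _ (Sum.inl (h.symm y, 1)) = _
      simpa using mk_inl_one_eq_mk_inr h (h.symm y)
  continuous_toFun := continuous_mk_inl h
  continuous_invFun := continuous_toProd h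

end MappingCylinder

/-- The mapping cylinder of a homeomorphism `h : X ≃ₜ Y` is homeomorphic to the
cylinder `X × [0,1]`, rel its two ends: `(x, 0)` goes to the class of `(x, 0)` in the
`X × [0,1]` summand, and `(x, 1)` goes to the class of `h x` in the `Y` summand. -/
theorem mappingCylinder_of_homeomorph
    {X Y : Type} [TopologicalSpace X] [TopologicalSpace Y] (h : X ≃ₜ Y) :
    ∃ Φ : (X × unitInterval) ≃ₜ MappingCylinder (h : X → Y),
      ∀ x : X,
        Φ (x, 0) = Quot.mk (MappingCylinderRel (h : X → Y)) (Sum.inl (x, 0)) ∧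
        Φ (x, 1) = Quot.mk (MappingCylinderRel (h : X → Y)) (Sum.inr (h x)) :=
  ⟨MappingCylinder.homeomorphProd h, fun x =>
    ⟨rfl, MappingCylinder.mk_inl_one_eq_mk_inr h x⟩⟩
end

section
/- Let Y be a topological space and consider Z = Y × [0,1] with the subset A = univ ×ˢ {0} (that is, A = Y × {0}). Then for every y ∈ Y, the fiber {γ ∈ Holink(Z, A) | γ(0) = (y, 0)} of the evaluation map, with the subspace topology, is a contractible space. -/
/-!
A path `γ` in the fiber over `(y, 0)` is deformed at time `s` into the path
`t ↦ ((γ ((1 - s) t)).1, max (γ ((1 - s) t)).2 (s t))`: it is traversed only up to `1 - s`, and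
its collar coordinate is pushed up to at least `s t`, so it never returns to `Y × {0}`. At `s = 1`
only the straight path `t ↦ (y, t)` remains.
-/

open Set unitInterval

theorem contractibleSpace_subtype_of_homotopy {X : Type*} [TopologicalSpace X] {p : X → Prop}
    (H : C(I × X, X)) (c : X) (hc : p c) (hH : ∀ s x, p x → p (H (s, x)))
    (h₀ : ∀ x, p x → H (0, x) = x) (h₁ : ∀ x, p x → H (1, x) = c) :
    ContractibleSpace {x // p x} := by
  rw [contractible_iff_id_nullhomotopic]
  exact ⟨⟨c, hc⟩, ⟨{ toFun := fun q => ⟨H (q.1, q.2), hH q.1 q.2 q.2.2⟩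
                     continuous_toFun := by fun_prop
                     map_zero_left := fun x => Subtype.ext (h₀ x x.2)
                     map_one_left := fun x => Subtype.ext (h₁ x x.2) }⟩⟩

namespace Holink

variable {Y : Type*} [TopologicalSpace Y]

theorem mem_collar_iff {γ : C(I, Y × I)} :
    γ ∈ Holink (univ ×ˢ {0} : Set (Y × I)) ↔ (γ 0).2 = 0 ∧ ∀ t, t ≠ 0 → (γ t).2 ≠ 0 := by
  simp [Holink]

def collarPath (y : Y) : C(I, Y × I) :=
  (ContinuousMap.const I y).prodMk (ContinuousMap.id I)

@[simp]
theorem collarPath_apply (y : Y) (t : I) : collarPath y t = (y, t) :=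
  rfl

theorem collarPath_mem_holink (y : Y) : collarPath y ∈ Holink (univ ×ˢ {0} : Set (Y × I)) :=
  mem_collar_iff.2 ⟨rfl, fun _ ht => ht⟩

variable (Y) in
def collarPush : C(I × C(I, Y × I), C(I, Y × I)) :=
  ContinuousMap.curry
    { toFun := fun q => ((q.1.2 (σ q.1.1 * q.2)).1, max (q.1.2 (σ q.1.1 * q.2)).2 (q.1.1 * q.2))
      continuous_toFun := by fun_prop }

@[simp]
theorem collarPush_apply (s t : I) (γ : C(I, Y × I)) :
    collarPush Y (s, γ) t = ((γ (σ s * t)).1, max (γ (σ s * t)).2 (s * t)) :=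
  rfl

theorem collarPush_apply_zero (s : I) (γ : C(I, Y × I)) : collarPush Y (s, γ) 0 = γ 0 := by
  ext <;> simp

theorem collarPush_zero (γ : C(I, Y × I)) : collarPush Y (0, γ) = γ := by
  ext t <;> simp

theorem collarPush_one {γ : C(I, Y × I)} (hγ : (γ 0).2 = 0) :
    collarPush Y (1, γ) = collarPath (γ 0).1 := by
  ext t <;> simp [hγ]

theorem collarPush_mem_holink (s : I) {γ : C(I, Y × I)}
    (hγ : γ ∈ Holink (univ ×ˢ {0} : Set (Y × I))) :
    collarPush Y (s, γ) ∈ Holink (univ ×ˢ {0} : Set (Y × I)) := by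
  rw [mem_collar_iff] at hγ ⊢
  refine ⟨by simpa using hγ.1, fun t ht => ?_⟩
  rcases eq_or_ne s 0 with rfl | hs
  · simpa using hγ.2 t ht
  · simp [hs, ht]

variable (Y) in
def restrictCollarPush :
    C(I × Holink (univ ×ˢ {0} : Set (Y × I)), Holink (univ ×ˢ {0} : Set (Y × I))) where
  toFun q := ⟨collarPush Y (q.1, q.2), collarPush_mem_holink q.1 q.2.2⟩
  continuous_toFun := by fun_prop

@[simp]
theorem coe_restrictCollarPush_apply (s : I) (γ : Holink (univ ×ˢ {0} : Set (Y × I))) :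
    (restrictCollarPush Y (s, γ) : C(I, Y × I)) = collarPush Y (s, γ) :=
  rfl

end Holink

/-- For the collared pair `(Y × [0,1], Y × {0})`, each fiber of the evaluation map on
the homotopy link is contractible. -/
theorem holink_collar_fiber_contractible
    {Y : Type} [TopologicalSpace Y] (y : Y) :
    ContractibleSpace
      {γ : Holink ((univ : Set Y) ×ˢ ({0} : Set unitInterval)) //
        γ.1 0 = (y, (0 : unitInterval))} :=
  contractibleSpace_subtype_of_homotopy (Holink.restrictCollarPush Y)
    ⟨Holink.collarPath y, Holink.collarPath_mem_holink y⟩ rfl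
    (fun s γ hγ => by simpa [Holink.collarPush_apply_zero] using hγ)
    (fun γ _ => Subtype.ext <| by simp [Holink.collarPush_zero])
    (fun γ hγ => Subtype.ext <| by simp [Holink.collarPush_one, hγ])
end
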